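/- Let n ≥ 1 be an integer and λ ∈ ℝ with λ ≥ 0, and set μ := √(n² + λ). Then the function ψ₂(λ,ρ) := ρ^{1−2n} · F((1−n−μ)/2, (1−n+μ)/2, 3/2 − n, ρ²) is a solution of the radial equation on (0,1); that is, for every ρ ∈ (0,1) one has (1−ρ²)·ψ₂''(λ,ρ) + ((2n − (2n+1)ρ²)/ρ)·ψ₂'(λ,ρ) = −λ·ψ₂(λ,ρ), where primes denote derivatives in ρ. -/

import Mathlib

open Set Filter
open scoped Topology Real

/-- Pochhammer symbol `(d)_k = d(d+1)⋯(d+k−1)` over the reals. -/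
noncomputable def poch (d : ℝ) (k : ℕ) : ℝ := Polynomial.eval d (ascPochhammer ℝ k)

/-- The `k`-th coefficient `(a)_k (b)_k / (k! (c)_k)` of the Gauss hypergeometric series. -/
noncomputable def hypCoeff (a b c : ℝ) (k : ℕ) : ℝ :=
  poch a k * poch b k / ((k.factorial : ℝ) * poch c k)

/-- The Gauss hypergeometric series `F(a,b,c,x) = Σ_k ((a)_k (b)_k / (k! (c)_k)) x^k`. -/
noncomputable def hypF (a b c x : ℝ) : ℝ := ∑' k : ℕ, hypCoeff a b c k * x ^ k

/-- The first hypergeometric solution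
`ψ₁(λ,ρ) = F((n−μ)/2, (n+μ)/2, n + 1/2, ρ²)` with `μ = √(n² + λ)`. -/
noncomputable def psi1 (n : ℕ) (lam ρ : ℝ) : ℝ :=
  hypF (((n : ℝ) - Real.sqrt ((n : ℝ) ^ 2 + lam)) / 2)
    (((n : ℝ) + Real.sqrt ((n : ℝ) ^ 2 + lam)) / 2) ((n : ℝ) + 1 / 2) (ρ ^ 2)

/-- The second hypergeometric solution
`ψ₂(λ,ρ) = ρ^{1−2n} F((1−n−μ)/2, (1−n+μ)/2, 3/2 − n, ρ²)` with `μ = √(n² + λ)`. -/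
noncomputable def psi2 (n : ℕ) (lam ρ : ℝ) : ℝ :=
  hypF ((1 - (n : ℝ) - Real.sqrt ((n : ℝ) ^ 2 + lam)) / 2)
    ((1 - (n : ℝ) + Real.sqrt ((n : ℝ) ^ 2 + lam)) / 2) (3 / 2 - (n : ℝ)) (ρ ^ 2)
    / ρ ^ (2 * n - 1)

/-- The radial equation
`(1−ρ²)·φ''(ρ) + ((2n − (2n+1)ρ²)/ρ)·φ'(ρ) = −λ·φ(ρ)` at the point `ρ`. -/
def RadialEq (n : ℕ) (lam : ℝ) (φ : ℝ → ℝ) (ρ : ℝ) : Prop :=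
  (1 - ρ ^ 2) * deriv (deriv φ) ρ
    + ((2 * (n : ℝ) - (2 * (n : ℝ) + 1) * ρ ^ 2) / ρ) * deriv φ ρ = -lam * φ ρ

/-!
On `(-1, 1)` the hypergeometric series converges absolutely (ratio test) and may be
differentiated termwise. The recurrence `(k+1)(c+k) C_{k+1} = (a+k)(b+k) C_k` of its coefficients
says exactly that `F` solves Gauss's equation `x(1-x)F'' + (c - (a+b+1)x)F' - abF = 0`.
For `c = 3/2 - n`, `a + b = 1 - n` and `4ab = 1 - 2n - λ` (which is where `μ = √(n² + λ)` comes
from), the radial operator plus `λ` applied to `ρ^{1-2n} F(ρ²)` equals `4ρ^{1-2n}` times Gauss's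
operator applied to `F` at `ρ²`.
-/

noncomputable def powSeriesSum (A : ℕ → ℝ) (x : ℝ) : ℝ := ∑' k : ℕ, A k * x ^ k

def derivCoeff (A : ℕ → ℝ) (k : ℕ) : ℝ := (k + 1) * A (k + 1)

theorem hasSum_mul_of_hasSum_succ {R : Type*} [CommRing R] [TopologicalSpace R]
    [IsTopologicalRing R] {B : ℕ → R} {x s : R} (hB : B 0 = 0)
    (h : HasSum (fun k => B (k + 1) * x ^ k) s) : HasSum (fun k => B k * x ^ k) (x * s) := by
  rw [← hasSum_nat_add_iff' 1]
  simpa [hB, pow_succ, mul_comm, mul_left_comm, mul_assoc] using h.mul_left x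

theorem hasSum_natCast_mul_coeff_mul_pow {A : ℕ → ℝ} {x : ℝ}
    (h : Summable fun k => derivCoeff A k * x ^ k) :
    HasSum (fun k => k * A k * x ^ k) (x * powSeriesSum (derivCoeff A) x) :=
  hasSum_mul_of_hasSum_succ (by simp) (h.hasSum.congr_fun fun k => by simp [derivCoeff])

section PowerSeries

variable {A : ℕ → ℝ} (hA : ∀ x : ℝ, |x| < 1 → Summable fun k => A k * x ^ k)
include hA

theorem summable_derivCoeff_mul_pow {x : ℝ} (hx : |x| < 1) :
    Summable fun k => derivCoeff A k * x ^ k := by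
  obtain ⟨s, hxs, hs1⟩ := exists_between hx
  have hs : 0 < s := (abs_nonneg x).trans_lt hxs
  have hq : |x / s| < 1 := by rwa [abs_div, abs_of_pos hs, div_lt_one hs]
  have hsA : Summable fun k => A (k + 1) * s ^ (k + 1) :=
    (summable_nat_add_iff 1).2 (hA s (by rwa [abs_of_pos hs]))
  have hbdd : (fun k : ℕ => ((k : ℝ) + 1) * (x / s) ^ k / s) =O[atTop] fun _ => (1 : ℝ) := by
    have h := ((tendsto_pow_const_mul_const_pow_of_abs_lt_one 1 hq).add
      (tendsto_pow_atTop_nhds_zero_of_abs_lt_one hq)).div_const s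
    refine (h.isBigO_one ℝ).congr_left fun k => ?_
    ring
  refine summable_of_isBigO_nat hsA (((Asymptotics.isBigO_refl _ _).mul hbdd).congr
    (fun k => ?_) (fun k => mul_one _))
  simp only [derivCoeff, div_pow]
  field_simp
  ring

theorem hasDerivAt_powSeriesSum {x : ℝ} (hx : |x| < 1) :
    HasDerivAt (powSeriesSum A) (powSeriesSum (derivCoeff A) x) x := by
  obtain ⟨r, hxr, hr1⟩ := exists_between hx
  have hr : 0 < r := (abs_nonneg x).trans_lt hxr
  have hu : Summable fun k : ℕ => |A k| * (k * r ^ (k - 1)) := by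
    rw [← summable_nat_add_iff 1]
    refine (summable_abs_iff.2 (summable_derivCoeff_mul_pow hA
      (x := r) (by rwa [abs_of_pos hr]))).congr fun k => ?_
    simp only [derivCoeff, abs_mul, abs_pow, abs_of_pos hr, Nat.add_sub_cancel]
    push_cast
    rw [abs_of_nonneg (by positivity)]
    ring
  have hderiv : HasSum (fun k => A k * (k * x ^ (k - 1))) (powSeriesSum (derivCoeff A) x) := by
    refine (hasSum_nat_add_iff' 1).1 ?_
    simp only [Finset.range_one, Finset.sum_singleton, Nat.cast_zero, zero_mul, mul_zero, sub_zero]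
    refine HasSum.congr_fun (summable_derivCoeff_mul_pow hA hx).hasSum fun k => ?_
    simp only [derivCoeff, Nat.add_sub_cancel]
    push_cast
    ring
  refine hderiv.tsum_eq ▸ hasDerivAt_tsum_of_isPreconnected hu isOpen_Ioo isPreconnected_Ioo
    (fun k y _ => (hasDerivAt_pow k y).const_mul (A k)) (fun k y hy => ?_)
    (y₀ := 0) ⟨by linarith, hr⟩ ?_ (abs_lt.1 hxr)
  · have hyr : |y| ≤ r := abs_le.2 ⟨hy.1.le, hy.2.le⟩
    rw [norm_mul, norm_mul, norm_pow, Real.norm_natCast, Real.norm_eq_abs, Real.norm_eq_abs]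
    gcongr
  · exact hA 0 (by simp)

theorem powSeriesSum_gauss_ode {a b c : ℝ}
    (hrec : ∀ k : ℕ, (k + 1) * (c + k) * A (k + 1) = (a + k) * (b + k) * A k)
    {x : ℝ} (hx : |x| < 1) :
    x * (1 - x) * powSeriesSum (derivCoeff (derivCoeff A)) x
      + (c - (a + b + 1) * x) * powSeriesSum (derivCoeff A) x - a * b * powSeriesSum A x = 0 := by
  have hA' : ∀ y : ℝ, |y| < 1 → Summable fun k => derivCoeff A k * y ^ k :=
    fun y hy => summable_derivCoeff_mul_pow hA hy
  have hF : HasSum (fun k => A k * x ^ k) (powSeriesSum A x) := (hA x hx).hasSum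
  have hF' : HasSum (fun k => derivCoeff A k * x ^ k) (powSeriesSum (derivCoeff A) x) :=
    (hA' x hx).hasSum
  have hxF' := hasSum_natCast_mul_coeff_mul_pow (hA' x hx)
  have hxF'' := hasSum_natCast_mul_coeff_mul_pow (summable_derivCoeff_mul_pow hA' hx)
  have hx2F'' : HasSum (fun k => k * (k - 1) * A k * x ^ k)
      (x * (x * powSeriesSum (derivCoeff (derivCoeff A)) x)) :=
    hasSum_mul_of_hasSum_succ (by simp)
      (hxF''.congr_fun fun k => by simp only [derivCoeff]; push_cast; ring)
  have htotal := ((hxF''.sub hx2F'').add ((hF'.mul_left c).sub (hxF'.mul_left (a + b + 1)))).sub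
    (hF.mul_left (a * b))
  have hterm : ∀ k : ℕ, k * derivCoeff A k * x ^ k - k * (k - 1) * A k * x ^ k
      + (c * (derivCoeff A k * x ^ k) - (a + b + 1) * (k * A k * x ^ k))
      - a * b * (A k * x ^ k) = 0 := fun k => by
    unfold derivCoeff
    linear_combination x ^ k * hrec k
  simp only [hterm] at htotal
  linear_combination htotal.unique hasSum_zero

end PowerSeries

theorem poch_succ (d : ℝ) (k : ℕ) : poch d (k + 1) = poch d k * (d + k) :=
  ascPochhammer_succ_eval k d

theorem tendsto_hypCoeff_ratio (a b c : ℝ) :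
    Tendsto (fun k : ℕ => (a + k) * (b + k) / ((k + 1) * (c + k))) atTop (𝓝 1) := by
  have h := (tendsto_add_mul_div_add_mul_atTop_nhds a 1 1 one_ne_zero).mul
    (tendsto_add_mul_div_add_mul_atTop_nhds b c 1 one_ne_zero)
  simp only [one_mul, div_one, mul_one] at h
  refine h.congr fun k => ?_
  rw [div_mul_div_comm, add_comm 1 (k : ℝ)]

section Hypergeometric

variable (a b : ℝ) {c : ℝ} (hc : ∀ k : ℕ, c + k ≠ 0)
include hc

theorem poch_ne_zero (k : ℕ) : poch c k ≠ 0 := by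
  induction k with
  | zero => simp [poch]
  | succ k ih => rw [poch_succ]; exact mul_ne_zero ih (hc k)

theorem hypCoeff_succ_mul (k : ℕ) :
    (k + 1) * (c + k) * hypCoeff a b c (k + 1) = (a + k) * (b + k) * hypCoeff a b c k := by
  have := poch_ne_zero hc k
  have := hc k
  simp only [hypCoeff, poch_succ, Nat.factorial_succ]
  push_cast
  field_simp

theorem hypCoeff_succ (k : ℕ) :
    hypCoeff a b c (k + 1) = (a + k) * (b + k) / ((k + 1) * (c + k)) * hypCoeff a b c k := by
  rw [div_mul_eq_mul_div, eq_div_iff (mul_ne_zero (by positivity) (hc k)), mul_comm,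
    hypCoeff_succ_mul a b hc]

theorem summable_hypCoeff_mul_pow {x : ℝ} (hx : |x| < 1) :
    Summable fun k => hypCoeff a b c k * x ^ k := by
  obtain ⟨r, hxr, hr1⟩ := exists_between hx
  have hlim := ((tendsto_hypCoeff_ratio a b c).abs.mul_const |x|)
  rw [abs_one, one_mul] at hlim
  refine summable_of_ratio_norm_eventually_le hr1 ?_
  filter_upwards [hlim.eventually_le_const hxr] with k hk
  rw [hypCoeff_succ a b hc, Real.norm_eq_abs, Real.norm_eq_abs, pow_succ]
  calc _ = |(a + k) * (b + k) / ((k + 1) * (c + k))| * |x| * |hypCoeff a b c k * x ^ k| := by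
        simp only [abs_mul]; ring
    _ ≤ r * |hypCoeff a b c k * x ^ k| := by gcongr

end Hypergeometric

theorem sq_mem_Ioo_zero_one {y : ℝ} (hy : y ∈ Ioo (0 : ℝ) 1) : y ^ 2 ∈ Ioo (0 : ℝ) 1 :=
  ⟨pow_pos hy.1 2, pow_lt_one₀ hy.1.le hy.2 two_ne_zero⟩

theorem deriv_deriv_eq_of_hasDerivAt {𝕜 E : Type*} [NontriviallyNormedField 𝕜]
    [NormedAddCommGroup E] [NormedSpace 𝕜 E] {f f' : 𝕜 → E} {s : Set 𝕜} {x : 𝕜} {f'' : E}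
    (hs : s ∈ 𝓝 x) (hf : ∀ y ∈ s, HasDerivAt f (f' y) y) (hf' : HasDerivAt f' f'' x) :
    deriv (deriv f) x = f'' := by
  rw [Filter.EventuallyEq.deriv_eq (Filter.eventually_of_mem hs fun y hy => (hf y hy).deriv)]
  exact hf'.deriv

theorem hasDerivAt_comp_sq_mul_zpow {F : ℝ → ℝ} {d ρ : ℝ} (m : ℤ)
    (hF : HasDerivAt F d (ρ ^ 2)) (hρ : ρ ≠ 0) :
    HasDerivAt (fun y => F (y ^ 2) * y ^ m)
      (2 * (d * ρ ^ (m + 1)) + m * (F (ρ ^ 2) * ρ ^ (m - 1))) ρ := by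
  have hsq : HasDerivAt (fun y : ℝ => y ^ 2) (2 * ρ) ρ := by simpa using hasDerivAt_pow 2 ρ
  refine ((HasDerivAt.comp (h := fun y : ℝ => y ^ 2) ρ hF hsq).mul
    (hasDerivAt_zpow m ρ (Or.inl hρ))).congr_deriv ?_
  rw [zpow_add_one₀ hρ, Function.comp_apply]
  ring

theorem radialEq_comp_sq_mul_zpow (n : ℕ) (lam : ℝ) {a b : ℝ} (hab : a + b = 1 - n)
    (hab' : 4 * (a * b) = 1 - 2 * n - lam) {F F' F'' : ℝ → ℝ}
    (hF : ∀ x ∈ Ioo (0 : ℝ) 1, HasDerivAt F (F' x) x)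
    (hF' : ∀ x ∈ Ioo (0 : ℝ) 1, HasDerivAt F' (F'' x) x) {ρ : ℝ} (hρ : ρ ∈ Ioo (0 : ℝ) 1)
    (hode : ρ ^ 2 * (1 - ρ ^ 2) * F'' (ρ ^ 2) + (3 / 2 - n - (a + b + 1) * ρ ^ 2) * F' (ρ ^ 2)
      - a * b * F (ρ ^ 2) = 0) :
    RadialEq n lam (fun y => F (y ^ 2) * y ^ (1 - 2 * n : ℤ)) ρ := by
  set m : ℤ := 1 - 2 * n
  have hφ : ∀ y ∈ Ioo (0 : ℝ) 1, HasDerivAt (fun y => F (y ^ 2) * y ^ m)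
      (2 * (F' (y ^ 2) * y ^ (m + 1)) + m * (F (y ^ 2) * y ^ (m - 1))) y := fun y hy =>
    hasDerivAt_comp_sq_mul_zpow m (hF _ (sq_mem_Ioo_zero_one hy)) hy.1.ne'
  have hρ0 := hρ.1.ne'
  have hρ2 := sq_mem_Ioo_zero_one hρ
  have hφ' := ((hasDerivAt_comp_sq_mul_zpow (m + 1) (hF' _ hρ2) hρ0).const_mul 2).add
    ((hasDerivAt_comp_sq_mul_zpow (m - 1) (hF _ hρ2) hρ0).const_mul (m : ℝ))
  unfold RadialEq
  rw [deriv_deriv_eq_of_hasDerivAt (isOpen_Ioo.mem_nhds hρ) hφ hφ', (hφ ρ hρ).deriv]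
  have hpow : ∀ e : ℤ, ∀ j : ℕ, e = m - 2 + j → ρ ^ e = ρ ^ (m - 2) * ρ ^ j := by
    rintro e j rfl
    rw [zpow_add₀ hρ0, zpow_natCast]
  beta_reduce
  rw [hpow (m + 1 + 1) 4 (by push_cast; ring), hpow (m + 1 - 1) 2 (by push_cast; ring),
    hpow (m - 1 + 1) 2 (by push_cast; ring), hpow (m - 1 - 1) 0 (by push_cast; ring),
    hpow (m + 1) 3 (by push_cast; ring), hpow (m - 1) 1 (by push_cast; ring),
    hpow m 2 (by push_cast; ring)]
  have hm : (m : ℝ) = 1 - 2 * n := by simp [m]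
  push_cast [hm]
  field_simp
  linear_combination 4 * ρ ^ 2 * hode + 4 * ρ ^ 4 * F' (ρ ^ 2) * hab + ρ ^ 2 * F (ρ ^ 2) * hab'

/-- `ψ₂(λ,·)` solves the radial equation on `(0,1)`. -/
theorem psi2_solves_radialEq (n : ℕ) (hn : 1 ≤ n) (lam : ℝ) (hlam : 0 ≤ lam) :
    ∀ ρ ∈ Set.Ioo (0 : ℝ) 1, RadialEq n lam (psi2 n lam) ρ := by
  intro ρ hρ
  set μ := √((n : ℝ) ^ 2 + lam)
  set a := (1 - (n : ℝ) - μ) / 2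
  set b := (1 - (n : ℝ) + μ) / 2
  have hc : ∀ k : ℕ, (3 / 2 - n : ℝ) + k ≠ 0 := fun k h => by
    have : (3 + 2 * k : ℝ) = 2 * n := by linarith
    norm_cast at this
    omega
  have hpsi : psi2 n lam = fun y => hypF a b (3 / 2 - n) (y ^ 2) * y ^ (1 - 2 * n : ℤ) := by
    funext y
    rw [psi2, div_eq_mul_inv, ← zpow_natCast y (2 * n - 1), ← zpow_neg]
    congr 2
    omega
  have hab : a + b = 1 - n := by ring
  have hab' : 4 * (a * b) = 1 - 2 * n - lam := by
    have hμ : μ ^ 2 = n ^ 2 + lam := Real.sq_sqrt (by positivity)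
    linear_combination -hμ
  have hunit : ∀ x ∈ Ioo (0 : ℝ) 1, |x| < 1 := fun x hx => abs_lt.2 ⟨by linarith [hx.1], hx.2⟩
  have hC := fun x (hx : |x| < 1) => summable_hypCoeff_mul_pow a b hc hx
  have hC' := fun x (hx : |x| < 1) => summable_derivCoeff_mul_pow hC hx
  rw [hpsi]
  exact radialEq_comp_sq_mul_zpow n lam hab hab'
    (fun x hx => hasDerivAt_powSeriesSum hC (hunit x hx))
    (fun x hx => hasDerivAt_powSeriesSum hC' (hunit x hx)) hρ
    (powSeriesSum_gauss_ode hC (hypCoeff_succ_mul a b hc) (hunit _ (sq_mem_Ioo_zero_one hρ)))
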